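/- Let δ > 0, a, c ∈ ℝ, and let A, C, K₂, K₀ : I → ℝ be differentiable on a real interval I satisfying A' + 2A² = -a, C' + δ²A = -c, K₂' + 4AK₂ + δ²K₂² = 0, and K₀' + 4A + (3δ²/2)K₂ = 0 on I. Define Φ(t, x) = A(t)x² + C(t) and m(t, x) = x·exp(-(K₂(t)/2)x² + K₀(t)). Then for every t ∈ I and every x ∈ ℝ, ∂_t Φ + (1/2)(∂_x Φ)² + (δ²/2)∂²_{xx} Φ = -(a x² + c) and ∂_t m + ∂_x(m · ∂_x Φ) = (δ²/2)∂²_{xx} m. -/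

import Mathlib

/-!
Inserting the ansatz, the HJB equation becomes a quadratic polynomial in `x`, and the KFP
equation becomes `exp(-(K₂/2)x² + K₀)` times an odd cubic polynomial in `x`. The ODEs for
`A, C` and for `K₂, K₀` are exactly the conditions that the coefficients of these polynomials
match, so both equations hold pointwise in `t` with no integration of the ODEs required.
-/

open Real

section Quadratic

variable (b c : ℝ)

theorem hasDerivAt_quadratic (y : ℝ) :
    HasDerivAt (fun z : ℝ => b * z ^ 2 + c) (2 * b * y) y :=
  (((hasDerivAt_pow 2 y).const_mul b).add_const c).congr_deriv (by ring)

theorem deriv_quadratic :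
    deriv (fun z : ℝ => b * z ^ 2 + c) = fun y => 2 * b * y :=
  funext fun y => (hasDerivAt_quadratic b c y).deriv

theorem deriv_deriv_quadratic (x : ℝ) :
    deriv (deriv (fun z : ℝ => b * z ^ 2 + c)) x = 2 * b := by
  rw [deriv_quadratic]
  simp

end Quadratic

section GaussianProfile

variable (p q : ℝ)

theorem hasDerivAt_exp_quadratic (y : ℝ) :
    HasDerivAt (fun z : ℝ => exp (p * z ^ 2 + q)) (2 * p * y * exp (p * y ^ 2 + q)) y :=
  (hasDerivAt_quadratic p q y).exp.congr_deriv (by ring)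

theorem hasDerivAt_mul_exp_quadratic (y : ℝ) :
    HasDerivAt (fun z : ℝ => z * exp (p * z ^ 2 + q))
      ((1 + 2 * p * y ^ 2) * exp (p * y ^ 2 + q)) y :=
  ((hasDerivAt_id' y).mul (hasDerivAt_exp_quadratic p q y)).congr_deriv (by ring)

theorem deriv_deriv_mul_exp_quadratic (x : ℝ) :
    deriv (deriv (fun z : ℝ => z * exp (p * z ^ 2 + q))) x
      = (6 * p * x + 4 * p ^ 2 * x ^ 3) * exp (p * x ^ 2 + q) := by
  have hderiv : deriv (fun z : ℝ => z * exp (p * z ^ 2 + q))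
      = fun y => (1 + 2 * p * y ^ 2) * exp (p * y ^ 2 + q) :=
    funext fun y => (hasDerivAt_mul_exp_quadratic p q y).deriv
  have hcoeff : HasDerivAt (fun y : ℝ => 1 + 2 * p * y ^ 2) (2 * (2 * p) * x) x := by
    simpa only [add_comm] using hasDerivAt_quadratic (2 * p) 1 x
  have hsecond : HasDerivAt (fun y : ℝ => (1 + 2 * p * y ^ 2) * exp (p * y ^ 2 + q))
      (2 * (2 * p) * x * exp (p * x ^ 2 + q)
        + (1 + 2 * p * x ^ 2) * (2 * p * x * exp (p * x ^ 2 + q))) x :=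
    hcoeff.mul (hasDerivAt_exp_quadratic p q x)
  rw [hderiv, hsecond.deriv]
  ring

theorem hasDerivAt_mul_exp_quadratic_mul_linear (b x : ℝ) :
    HasDerivAt (fun y : ℝ => y * exp (p * y ^ 2 + q) * (2 * b * y))
      ((1 + 2 * p * x ^ 2) * exp (p * x ^ 2 + q) * (2 * b * x)
        + x * exp (p * x ^ 2 + q) * (2 * b)) x :=
  ((hasDerivAt_mul_exp_quadratic p q x).mul ((hasDerivAt_id' x).const_mul (2 * b))).congr_deriv
    (by ring)

end GaussianProfile

theorem quadratic_ansatz_solves_HJB {A C : ℝ → ℝ} {δ a c t : ℝ}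
    (hA : HasDerivAt A (-a - 2 * (A t) ^ 2) t) (hC : HasDerivAt C (-c - δ ^ 2 * A t) t)
    (x : ℝ) :
    deriv (fun s => A s * x ^ 2 + C s) t
        + (1 / 2) * (deriv (fun y => A t * y ^ 2 + C t) x) ^ 2
        + (δ ^ 2 / 2) * deriv (deriv (fun y => A t * y ^ 2 + C t)) x
      = -(a * x ^ 2 + c) := by
  have htime : HasDerivAt (fun s => A s * x ^ 2 + C s)
      ((-a - 2 * (A t) ^ 2) * x ^ 2 + (-c - δ ^ 2 * A t)) t :=
    (hA.mul_const (x ^ 2)).add hC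
  rw [htime.deriv, deriv_deriv_quadratic, deriv_quadratic]
  ring

theorem gaussian_ansatz_solves_KFP {K₂ K₀ : ℝ → ℝ} {δ α γ t : ℝ}
    (hK₂ : HasDerivAt K₂ (-(4 * α * K₂ t) - δ ^ 2 * (K₂ t) ^ 2) t)
    (hK₀ : HasDerivAt K₀ (-(4 * α) - (3 * δ ^ 2 / 2) * K₂ t) t) (x : ℝ) :
    deriv (fun s => x * exp (-(K₂ s / 2) * x ^ 2 + K₀ s)) t
        + deriv (fun y => (y * exp (-(K₂ t / 2) * y ^ 2 + K₀ t))
            * deriv (fun z => α * z ^ 2 + γ) y) x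
      = (δ ^ 2 / 2) * deriv (deriv (fun y => y * exp (-(K₂ t / 2) * y ^ 2 + K₀ t))) x := by
  have hexponent : HasDerivAt (fun s => -(K₂ s / 2) * x ^ 2 + K₀ s)
      (-((-(4 * α * K₂ t) - δ ^ 2 * (K₂ t) ^ 2) / 2) * x ^ 2
        + (-(4 * α) - (3 * δ ^ 2 / 2) * K₂ t)) t :=
    (((hK₂.div_const 2).neg).mul_const (x ^ 2)).add hK₀
  rw [(hexponent.exp.const_mul x).deriv, deriv_quadratic,
    (hasDerivAt_mul_exp_quadratic_mul_linear _ _ α x).deriv, deriv_deriv_mul_exp_quadratic]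
  ring

theorem semiaxis_ansatz_solves_MFG_system_general
    (δ a c : ℝ) (I : Set ℝ)
    (A C K₂ K₀ : ℝ → ℝ)
    (hA : ∀ t ∈ I, HasDerivAt A (-a - 2 * (A t) ^ 2) t)
    (hC : ∀ t ∈ I, HasDerivAt C (-c - δ ^ 2 * A t) t)
    (hK₂ : ∀ t ∈ I,
      HasDerivAt K₂ (-(4 * A t * K₂ t) - δ ^ 2 * (K₂ t) ^ 2) t)
    (hK₀ : ∀ t ∈ I,
      HasDerivAt K₀ (-(4 * A t) - (3 * δ ^ 2 / 2) * K₂ t) t) :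
    ∀ t ∈ I, ∀ x : ℝ,
      (deriv (fun s => A s * x ^ 2 + C s) t
          + (1 / 2) * (deriv (fun y => A t * y ^ 2 + C t) x) ^ 2
          + (δ ^ 2 / 2) * deriv (deriv (fun y => A t * y ^ 2 + C t)) x
        = -(a * x ^ 2 + c)) ∧
      (deriv (fun s => x * Real.exp (-(K₂ s / 2) * x ^ 2 + K₀ s)) t
          + deriv (fun y => (y * Real.exp (-(K₂ t / 2) * y ^ 2 + K₀ t))
              * deriv (fun z => A t * z ^ 2 + C t) y) x
        = (δ ^ 2 / 2) *
            deriv (deriv (fun y => y * Real.exp (-(K₂ t / 2) * y ^ 2 + K₀ t))) x) :=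
  fun t ht x =>
    ⟨quadratic_ansatz_solves_HJB (hA t ht) (hC t ht) x,
      gaussian_ansatz_solves_KFP (hK₂ t ht) (hK₀ t ht) x⟩

/-- If `A, C, K₂, K₀` are differentiable on a real interval `I` and satisfy
`A' + 2A² = -a`, `C' + δ²A = -c`, `K₂' + 4AK₂ + δ²K₂² = 0`, `K₀' + 4A + (3δ²/2)K₂ = 0`
on `I`, then the semi-axis ansatz `Φ(t,x) = A(t)x² + C(t)`,
`m(t,x) = x·exp(-(K₂(t)/2)x² + K₀(t))` solves both the Hamilton–Jacobi–Bellman equation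
`∂ₜΦ + (1/2)(∂ₓΦ)² + (δ²/2)∂²ₓₓΦ = -(ax² + c)` and the Kolmogorov–Fokker–Planck
equation `∂ₜm + ∂ₓ(m ∂ₓΦ) = (δ²/2)∂²ₓₓm` for all `t ∈ I` and all `x ∈ ℝ`. -/
theorem semiaxis_ansatz_solves_MFG_system
    (δ a c : ℝ) (hδ : 0 < δ) (I : Set ℝ) (hI : I.OrdConnected)
    (A C K₂ K₀ : ℝ → ℝ)
    (hA : ∀ t ∈ I, HasDerivAt A (-a - 2 * (A t) ^ 2) t)
    (hC : ∀ t ∈ I, HasDerivAt C (-c - δ ^ 2 * A t) t)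
    (hK₂ : ∀ t ∈ I,
      HasDerivAt K₂ (-(4 * A t * K₂ t) - δ ^ 2 * (K₂ t) ^ 2) t)
    (hK₀ : ∀ t ∈ I,
      HasDerivAt K₀ (-(4 * A t) - (3 * δ ^ 2 / 2) * K₂ t) t) :
    ∀ t ∈ I, ∀ x : ℝ,
      (deriv (fun s => A s * x ^ 2 + C s) t
          + (1 / 2) * (deriv (fun y => A t * y ^ 2 + C t) x) ^ 2
          + (δ ^ 2 / 2) * deriv (deriv (fun y => A t * y ^ 2 + C t)) x
        = -(a * x ^ 2 + c)) ∧
      (deriv (fun s => x * Real.exp (-(K₂ s / 2) * x ^ 2 + K₀ s)) t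
          + deriv (fun y => (y * Real.exp (-(K₂ t / 2) * y ^ 2 + K₀ t))
              * deriv (fun z => A t * z ^ 2 + C t) y) x
        = (δ ^ 2 / 2) *
            deriv (deriv (fun y => y * Real.exp (-(K₂ t / 2) * y ^ 2 + K₀ t))) x) :=
  semiaxis_ansatz_solves_MFG_system_general δ a c I A C K₂ K₀ hA hC hK₂ hK₀
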